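/- Let A ∈ SL(2,ℤ) be hyperbolic with eigenvalues λ and λ⁻¹ where |λ| > 1, and let v_s ∈ ℝ² be a unit eigenvector with A v_s = λ⁻¹ v_s. Let U ⊆ 𝕋² be a nonempty open set. Then there exist ν ∈ (0,1) and C ≥ 1, depending only on A and U, such that for every integer T ≥ 0 with C|λ|^{−T} ≤ 1 and every x ∈ ℝ², the set { s ∈ ℝ : π(A^{−j}(x + s v_s)) ∉ U for all integers 0 ≤ j ≤ T } is ν-porous up to scale C|λ|^{−T}. -/

import Mathlib

/-!
The stable direction of a hyperbolic `A ∈ SL(2,ℤ)` has irrational slope: otherwise it would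
contain a nonzero lattice vector `w` with `Aⁿ w = λ⁻ⁿ w → 0`, impossible for integer vectors.
So the stable line is dense in `𝕋²`, and by compactness every translate of it enters `U` within
a bounded time `L` and stays there for a time `δ`. Since `A⁻ʲ` stretches the stable line by
`|λ|ʲ`, an interval `I` of length `≥ C|λ|^{-T}` is mapped, for the least `j ≤ T` with
`|λ|ʲ|I| ≥ K`, onto a segment of length between `K` and `|λ|K`; this segment contains a
sub-segment of length `δ` inside `U`, whose preimage is a gap of relative size `≥ δ/(|λ|K)`
in `I`.
-/

open Set Matrix

/-- A set `X ⊆ ℝ` is `ν`-porous up to scale `h`: every interval `I = [a,b]` with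
`h ≤ |I| ≤ 1` contains a subinterval `J = [c,d]` with `|J| = ν|I|` and `J ∩ X = ∅`. -/
def IsPorousUpTo (ν h : ℝ) (X : Set ℝ) : Prop :=
  ∀ a b : ℝ, h ≤ b - a → b - a ≤ 1 →
    ∃ c d : ℝ, a ≤ c ∧ d ≤ b ∧ d - c = ν * (b - a) ∧ Set.Icc c d ∩ X = ∅

/-- The canonical projection `ℝ² → 𝕋² = (ℝ/ℤ) × (ℝ/ℤ)`. -/
noncomputable def torusProj (x : EuclideanSpace ℝ (Fin 2)) :
    AddCircle (1:ℝ) × AddCircle (1:ℝ) :=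
  (((x 0 : ℝ) : AddCircle (1:ℝ)), ((x 1 : ℝ) : AddCircle (1:ℝ)))

namespace Matrix

variable {n R : Type*} [Fintype n] [DecidableEq n]

theorem pow_mulVec_eq_pow_smul [CommRing R] {B : Matrix n n R} {v : n → R} {c : R}
    (h : B *ᵥ v = c • v) (j : ℕ) : (B ^ j) *ᵥ v = c ^ j • v := by
  induction j with
  | zero => simp
  | succ j ih => rw [pow_succ, ← mulVec_mulVec, h, mulVec_smul, ih, smul_smul, pow_succ']

theorem inv_mulVec_eq_inv_smul [Field R] {B : Matrix n n R} (hB : IsUnit B.det) {v : n → R}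
    {c : R} (hc : c ≠ 0) (h : B *ᵥ v = c • v) : B⁻¹ *ᵥ v = c⁻¹ • v := by
  calc B⁻¹ *ᵥ v = c⁻¹ • ((B⁻¹ * B) *ᵥ v) := by
        rw [← mulVec_mulVec, h, mulVec_smul, inv_smul_smul₀ hc]
    _ = c⁻¹ • v := by rw [nonsing_inv_mul B hB, one_mulVec]

theorem map_intCast_mulVec_ne_smul {A : Matrix n n ℤ} {μ : ℝ} (hμ₀ : μ ≠ 0) (hμ : |μ| < 1)
    {w : n → ℤ} (hw : w ≠ 0) :
    A.map (Int.cast : ℤ → ℝ) *ᵥ (Int.cast ∘ w) ≠ μ • (Int.cast ∘ w) := by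
  intro h
  obtain ⟨i, hi⟩ := Function.ne_iff.1 hw
  have hwi : (w i : ℝ) ≠ 0 := by exact_mod_cast hi
  obtain ⟨k, hk⟩ := exists_pow_lt_of_lt_one (inv_pos.2 (abs_pos.2 hwi)) hμ
  have hint : (((A ^ k) *ᵥ w) i : ℝ) = μ ^ k * w i := by
    have := (Int.castRingHom ℝ).map_mulVec (A ^ k) w i
    rw [Matrix.map_pow] at this
    simpa [pow_mulVec_eq_pow_smul h] using this
  have hsmall : |(((A ^ k) *ᵥ w) i : ℝ)| < 1 := by
    rw [hint, abs_mul, abs_pow]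
    calc |μ| ^ k * |(w i : ℝ)| < |(w i : ℝ)|⁻¹ * |(w i : ℝ)| := by gcongr
      _ = 1 := inv_mul_cancel₀ (abs_ne_zero.2 hwi)
  have hzero : ((A ^ k) *ᵥ w) i = 0 := Int.abs_lt_one_iff.1 (by exact_mod_cast hsmall)
  rw [hzero, Int.cast_zero, eq_comm] at hint
  exact mul_ne_zero (pow_ne_zero k hμ₀) hwi hint

end Matrix

theorem exists_intCast_smul_of_not_irrational_slope {v : Fin 2 → ℝ}
    (h : ¬ (v 0 ≠ 0 ∧ Irrational (v 1 / v 0))) :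
    ∃ w : Fin 2 → ℤ, w ≠ 0 ∧ ∃ c : ℝ, v = c • (Int.cast ∘ w) := by
  by_cases h₀ : v 0 = 0
  · refine ⟨![0, 1], by simp, v 1, ?_⟩
    ext i; fin_cases i <;> simp [h₀]
  · obtain ⟨q, hq⟩ : ∃ q : ℚ, (q : ℝ) = v 1 / v 0 := by
      simpa [Irrational, h₀] using h
    refine ⟨![q.den, q.num], by simp, v 0 / q.den, ?_⟩
    rw [Rat.cast_def, eq_div_iff h₀] at hq
    ext i; fin_cases i
    · simp [field]
    · simp [← hq, field]

theorem irrational_slope_of_mulVec_eq_smul {A : Matrix (Fin 2) (Fin 2) ℤ} {μ : ℝ} (hμ₀ : μ ≠ 0)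
    (hμ : |μ| < 1) {v : Fin 2 → ℝ} (hv : v ≠ 0) (h : A.map Int.cast *ᵥ v = μ • v) :
    v 0 ≠ 0 ∧ Irrational (v 1 / v 0) := by
  by_contra hslope
  obtain ⟨w, hw, c, rfl⟩ := exists_intCast_smul_of_not_irrational_slope hslope
  have hc : c ≠ 0 := by rintro rfl; simp at hv
  rw [mulVec_smul, smul_comm] at h
  exact map_intCast_mulVec_ne_smul hμ₀ hμ hw (smul_right_injective _ hc h)

noncomputable def torusLine (v₀ v₁ : ℝ) : ℝ →+ AddCircle (1:ℝ) × AddCircle (1:ℝ) :=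
  ((QuotientAddGroup.mk' _).comp (AddMonoidHom.mulRight v₀)).prod
    ((QuotientAddGroup.mk' _).comp (AddMonoidHom.mulRight v₁))

section TorusLine

variable {v₀ v₁ : ℝ}

@[simp]
theorem torusLine_apply (t : ℝ) :
    torusLine v₀ v₁ t = (((t * v₀ : ℝ) : AddCircle (1:ℝ)), ((t * v₁ : ℝ) : AddCircle (1:ℝ))) :=
  rfl

theorem continuous_torusLine : Continuous (torusLine v₀ v₁) :=
  ((AddCircle.continuous_mk' 1).comp (continuous_mul_const v₀)).prodMk
    ((AddCircle.continuous_mk' 1).comp (continuous_mul_const v₁))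

theorem denseRange_torusLine (hv₀ : v₀ ≠ 0) (hα : Irrational (v₁ / v₀)) :
    DenseRange (torusLine v₀ v₁) := by
  have hcl : closure (range (torusLine v₀ v₁)) = (torusLine v₀ v₁).range.topologicalClosure := by
    rw [AddSubgroup.topologicalClosure_coe, AddMonoidHom.coe_range]
  have hvert : ∀ y : AddCircle (1:ℝ),
      ((0 : AddCircle (1:ℝ)), y) ∈ closure (range (torusLine v₀ v₁)) := by
    have hdense : DenseRange (· • ((v₁ / v₀ : ℝ) : AddCircle (1:ℝ)) : ℤ → AddCircle (1:ℝ)) :=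
      AddCircle.denseRange_zsmul_coe_iff.2 (by rwa [div_one])
    have hsub : {(0 : AddCircle (1:ℝ))} ×ˢ range (· • ((v₁ / v₀ : ℝ) : AddCircle (1:ℝ)) : ℤ → _)
        ⊆ range (torusLine v₀ v₁) := by
      rintro ⟨_, _⟩ ⟨rfl, n, rfl⟩
      refine ⟨n / v₀, Prod.ext ?_ ?_⟩
      · rw [torusLine_apply, div_mul_cancel₀ _ hv₀, ← zsmul_one, QuotientAddGroup.mk_zsmul,
          AddCircle.coe_period, smul_zero]
      · dsimp only [torusLine_apply]
        rw [← QuotientAddGroup.mk_zsmul, zsmul_eq_mul, mul_div_assoc', div_mul_eq_mul_div]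
    intro y
    apply closure_mono hsub
    rw [closure_prod_eq, closure_singleton, hdense.closure_range]
    exact ⟨rfl, trivial⟩
  intro p
  obtain ⟨a, ha⟩ := QuotientAddGroup.mk_surjective p.1
  have hp : p = torusLine v₀ v₁ (a / v₀) + (0, p.2 - ((a / v₀ * v₁ : ℝ) : AddCircle (1:ℝ))) := by
    ext <;> simp [div_mul_cancel₀ _ hv₀, ha]
  rw [hcl] at hvert
  rw [hp, hcl]
  exact add_mem ((torusLine v₀ v₁).range.le_topologicalClosure ⟨_, rfl⟩) (hvert _)

theorem torusProj_toLp_add_smul (y v : Fin 2 → ℝ) (t : ℝ) :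
    torusProj (WithLp.toLp 2 (y + t • v))
      = torusProj (WithLp.toLp 2 y) + torusLine (v 0) (v 1) t := by
  simp [torusProj, mul_comm t]

end TorusLine

theorem exists_uniform_hitting_time {G : Type*} [AddCommGroup G] [TopologicalSpace G]
    [IsTopologicalAddGroup G] [CompactSpace G] {f : ℝ →+ G} (hf : Continuous f)
    (hfd : DenseRange f) {U : Set G} (hU : IsOpen U) (hU' : U.Nonempty) :
    ∃ L δ : ℝ, 0 ≤ L ∧ 0 < δ ∧ ∀ z : G, ∃ t, |t| ≤ L ∧ ∀ u, |u - t| ≤ δ → z + f u ∈ U := by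
  obtain ⟨p, hp⟩ := hU'
  obtain ⟨W, I, hW, hI, hpW, h0I, hWI⟩ := isOpen_prod_iff.1
    (hU.preimage (continuous_fst.add (hf.comp continuous_snd))) p 0 (by simpa using hp)
  obtain ⟨δ, hδ, hδI⟩ := Metric.isOpen_iff.1 hI 0 h0I
  have hcover : ∀ z : G, ∃ t, z + f t ∈ W := fun z =>
    hfd.exists_mem_open (hW.preimage (continuous_const_add z)) ⟨-z + p, by simpa using hpW⟩
  obtain ⟨F, hF⟩ := isCompact_univ.elim_finite_subcover (fun t => (· + f t) ⁻¹' W)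
    (fun t => hW.preimage (continuous_add_const _)) (fun z _ => mem_iUnion.2 (hcover z))
  refine ⟨∑ t ∈ F, |t|, δ / 2, Finset.sum_nonneg fun _ _ => abs_nonneg _, half_pos hδ,
    fun z => ?_⟩
  obtain ⟨t, htF, hzt⟩ := mem_iUnion₂.1 (hF (mem_univ z))
  refine ⟨t, Finset.single_le_sum (fun _ _ => abs_nonneg _) htF, fun u hu => ?_⟩
  have hut : u - t ∈ I := hδI (by rw [Metric.mem_ball, Real.dist_0_eq_abs]; linarith)
  simpa using hWI (mk_mem_prod (show z + f t ∈ W from hzt) hut)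

theorem exists_center_forall_abs_sub_le_add_mem {G : Type*} [AddCommGroup G] {f : ℝ →+ G}
    {U : Set G} {L δ : ℝ} (hit : ∀ z : G, ∃ t, |t| ≤ L ∧ ∀ u, |u - t| ≤ δ → z + f u ∈ U)
    (y : G) {m a b : ℝ} (hm : m ≠ 0) (hab : 2 * (L + δ) ≤ |m| * (b - a)) :
    ∃ c, a ≤ c - δ / |m| ∧ c + δ / |m| ≤ b ∧ ∀ s, |s - c| ≤ δ / |m| → y + f (m * s) ∈ U := by
  have hm' : 0 < |m| := abs_pos.2 hm
  obtain ⟨t, htL, ht⟩ := hit (y + f (m * ((a + b) / 2)))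
  have hrad : |t / m| + δ / |m| ≤ (b - a) / 2 := by
    rw [abs_div, ← add_div, div_le_iff₀ hm']
    linarith
  refine ⟨(a + b) / 2 + t / m, by linarith [neg_abs_le (t / m)],
    by linarith [le_abs_self (t / m)], fun s hs => ?_⟩
  have hu : |m * s - m * ((a + b) / 2) - t| ≤ δ := by
    rw [show m * s - m * ((a + b) / 2) - t = m * (s - ((a + b) / 2 + t / m)) by field_simp; ring,
      abs_mul]
    rwa [le_div_iff₀' hm'] at hs
  simpa [map_sub] using ht _ hu

theorem exists_pow_mul_mem_Icc {q K ε : ℝ} (hq : 0 ≤ q) (h₀ : ε ≤ q * K) :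
    ∀ {T : ℕ}, K ≤ q ^ T * ε → ∃ j ≤ T, q ^ j * ε ∈ Icc K (q * K)
  | 0, hT => ⟨0, le_rfl, by simpa using hT, by simpa using h₀⟩
  | T + 1, hT => by
    by_cases h : K ≤ q ^ T * ε
    · obtain ⟨j, hj, hj'⟩ := exists_pow_mul_mem_Icc hq h₀ h
      exact ⟨j, by omega, hj'⟩
    · refine ⟨T + 1, le_rfl, hT, ?_⟩
      rw [pow_succ', mul_assoc]
      exact mul_le_mul_of_nonneg_left (not_le.1 h).le hq

theorem isPorousUpTo_of_forall_hitting {G : Type*} [AddCommGroup G] {f : ℝ →+ G} {U : Set G}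
    {L δ K : ℝ} (hδ : 0 < δ) (hK : 1 ≤ K) (hLK : 2 * (L + δ) ≤ K)
    (hit : ∀ z : G, ∃ t, |t| ≤ L ∧ ∀ u, |u - t| ≤ δ → z + f u ∈ U) {l : ℝ} (hl : 1 < |l|)
    (T : ℕ) (y : ℕ → G) :
    IsPorousUpTo (δ / (|l| * K)) (K / |l| ^ T) {s | ∀ j ≤ T, y j + f (l ^ j * s) ∉ U} := by
  intro a b hKab hab
  have hl₀ : l ≠ 0 := by rintro rfl; norm_num at hl
  obtain ⟨j, hjT, hjK, hjK'⟩ := exists_pow_mul_mem_Icc (abs_nonneg l) (by nlinarith)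
    ((div_le_iff₀' (by positivity)).1 hKab)
  rw [← abs_pow] at hjK hjK'
  obtain ⟨c, hac, hcb, hc⟩ := exists_center_forall_abs_sub_le_add_mem hit (y j)
    (pow_ne_zero j hl₀) (hLK.trans hjK)
  set ρ := δ / |l ^ j|
  have hρ : 0 ≤ ρ := by positivity
  have hνρ : δ / (|l| * K) * (b - a) ≤ ρ := by
    rw [div_mul_eq_mul_div, div_le_div_iff₀ (by positivity) (by positivity)]
    nlinarith
  refine ⟨c - ρ, c - ρ + δ / (|l| * K) * (b - a), hac, by linarith, by ring, ?_⟩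
  refine eq_empty_iff_forall_notMem.2 fun s ⟨⟨hs₁, hs₂⟩, hs⟩ => hs j hjT (hc s ?_)
  exact abs_le.2 ⟨by linarith, by linarith⟩

/-- **Porosity along stable lines for hyperbolic toral automorphisms.** Let `A ∈ SL(2,ℤ)`
be hyperbolic with eigenvalues `l, l⁻¹`, `|l| > 1`, and let `vs` be a unit stable
eigenvector, `A vs = l⁻¹ vs`. For every nonempty open `U ⊆ 𝕋²` there are `ν ∈ (0,1)` and
`C ≥ 1` such that for every `T ≥ 0` with `C |l|^{-T} ≤ 1` and every `x ∈ ℝ²`, the set of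
`s ∈ ℝ` whose point `x + s vs` has backward orbit `A^{-j}(x + s vs)`, `0 ≤ j ≤ T`, avoiding
`U` is `ν`-porous up to scale `C |l|^{-T}`. -/
theorem stable_line_porosity (A : Matrix (Fin 2) (Fin 2) ℤ) (hdet : A.det = 1)
    (l : ℝ) (hl : 1 < |l|)
    (vs : EuclideanSpace ℝ (Fin 2)) (hvs : ‖vs‖ = 1)
    (heig : (A.map (Int.cast : ℤ → ℝ)).mulVec vs = l⁻¹ • vs)
    (U : Set (AddCircle (1:ℝ) × AddCircle (1:ℝ))) (hUopen : IsOpen U) (hUne : U.Nonempty) :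
    ∃ ν ∈ Set.Ioo (0:ℝ) 1, ∃ C : ℝ, 1 ≤ C ∧
      ∀ T : ℕ, C / |l| ^ T ≤ 1 → ∀ x : EuclideanSpace ℝ (Fin 2),
        IsPorousUpTo ν (C / |l| ^ T)
          {s : ℝ | ∀ j : ℕ, j ≤ T →
            torusProj (WithLp.toLp 2 (((A.map (Int.cast : ℤ → ℝ))⁻¹ ^ j).mulVec (x + s • vs))) ∉ U} := by
  have hl₀ : l ≠ 0 := by rintro rfl; norm_num at hl
  have hvs₀ : vs.ofLp ≠ 0 := by
    rintro h
    rw [← WithLp.ofLp_zero 2, (WithLp.ofLp_injective 2).eq_iff] at h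
    simp [h] at hvs
  obtain ⟨hv₀, hα⟩ := irrational_slope_of_mulVec_eq_smul (inv_ne_zero hl₀)
    (by rw [abs_inv]; exact inv_lt_one_of_one_lt₀ hl) hvs₀ heig
  obtain ⟨L, δ, hL, hδ, hit⟩ := exists_uniform_hitting_time continuous_torusLine
    (denseRange_torusLine hv₀ hα) hUopen hUne
  have hdetM : IsUnit (A.map (Int.cast : ℤ → ℝ)).det := by
    rw [← Int.cast_det, hdet, Int.cast_one]
    exact isUnit_one
  have hinv := inv_mulVec_eq_inv_smul hdetM (inv_ne_zero hl₀) heig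
  rw [inv_inv] at hinv
  refine ⟨δ / (|l| * (2 * (L + δ) + 1)), ⟨by positivity, ?_⟩, 2 * (L + δ) + 1, by linarith,
    fun T _ x => ?_⟩
  · rw [div_lt_one (by positivity)]
    nlinarith
  have horbit : ∀ (j : ℕ) (s : ℝ),
      torusProj (WithLp.toLp 2 (((A.map (Int.cast : ℤ → ℝ))⁻¹ ^ j) *ᵥ (x + s • vs)))
        = torusProj (WithLp.toLp 2 (((A.map (Int.cast : ℤ → ℝ))⁻¹ ^ j) *ᵥ x))
          + torusLine (vs 0) (vs 1) (l ^ j * s) := fun j s => by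
    rw [mulVec_add, mulVec_smul, pow_mulVec_eq_pow_smul hinv, smul_smul, mul_comm,
      torusProj_toLp_add_smul]
  simp_rw [horbit]
  exact isPorousUpTo_of_forall_hitting hδ (by linarith) (by linarith) hit hl T _
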